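/- Let J ⊆ ℕ be a finite nonempty set and let y = ∏_{j∈J} X (j+1) ∈ B. For s ∈ ℕ, the component (π_s ⊗ id)(ψ_B(y)) is nonzero if and only if s = Σ_{j∈J′} (2^(j+1) − 1) for some subset J′ ⊆ J. (This computes the set S(y) of first-factor dimensions occurring in the coproduct of the top class of Bβ_{2k}.) -/

import Mathlib

open MvPolynomial TensorProduct

/-- The field 𝔽₂. -/
abbrev F2 : Type := ZMod 2

/-- The polynomial ring `𝔽₂[X 0, X 1, X 2, …]`, used as a model both for
`H_*(∐ₖ Ratₖ; 𝔽₂) = 𝔽₂[g, g⁻¹Qg, Q(g⁻¹Qg), …]` (the "R" model, where `X 0 = g` and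
`X (i+1) = Qⁱ(g⁻¹Qg)`) and for `H_*(∐ₙ Bβₙ; 𝔽₂) = 𝔽₂[g, Qg, Q²g, …]`
(the "B" model, where `X i = Qⁱg`). -/
abbrev P : Type := MvPolynomial ℕ F2

/-- Weight of the variable `X i` in the braid model `B`: `wt(Qⁱg) = 2^i`. -/
def wB : ℕ → ℕ := fun i => 2 ^ i

/-- Dimension of the variable `X i` in the braid model `B`: `dim(Qⁱg) = 2^i - 1`. -/
def dB : ℕ → ℕ := fun i => 2 ^ i - 1

/-- Weight of the variable `X i` in the Rat model `R`: `wt(g) = 1`,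
`wt(Qⁱ(g⁻¹Qg)) = 2^i`. -/
def wR : ℕ → ℕ := fun i => match i with
  | 0 => 1
  | j + 1 => 2 ^ j

/-- Dimension of the variable `X i` in the Rat model `R`: `dim(g) = 0`,
`dim(Qⁱ(g⁻¹Qg)) = 2^(i+1) - 1`. -/
def dR : ℕ → ℕ := fun i => match i with
  | 0 => 0
  | j + 1 => 2 ^ (j + 1) - 1

/-- The weight (resp. dimension) of a monomial with exponent vector `m`: the sum,
with multiplicity, of the weights (resp. dimensions) `w i` of its variables. -/
def mwt (w : ℕ → ℕ) (m : ℕ →₀ ℕ) : ℕ := m.sum fun i e => e * w i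

/-- A polynomial is homogeneous of weight (resp. dimension) `n` with respect to the
variable-weight function `w` if every monomial in its support has weight
(resp. dimension) `n`. -/
def Homog (w : ℕ → ℕ) (n : ℕ) (x : P) : Prop := ∀ m ∈ x.support, mwt w m = n

/-- The 𝔽₂-linear span of the monomials of weight `n`. -/
noncomputable def spanWt (w : ℕ → ℕ) (n : ℕ) : Submodule F2 P :=
  Submodule.span F2 {p : P | ∃ m : ℕ →₀ ℕ, mwt w m = n ∧ p = monomial m 1}

/-- The image `N ⊗ M` inside `P ⊗ P` of two submodules `N, M ⊆ P`. -/
noncomputable def tensorSub (N M : Submodule F2 P) : Submodule F2 (P ⊗[F2] P) :=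
  Submodule.span F2 {t : P ⊗[F2] P | ∃ a ∈ N, ∃ b ∈ M, t = a ⊗ₜ[F2] b}

/-- `Q` is the Araki–Kudo operation on the Rat model: the 𝔽₂-linear map with
`Q(X 0) = X 0 · X 1`, `Q(X (i+1)) = X (i+2)`, and the Cartan formula
`Q(uv) = u²Q(v) + Q(u)v²`. -/
def IsQ (Q : P →ₗ[F2] P) : Prop :=
  Q (X 0) = X 0 * X 1 ∧ (∀ i : ℕ, Q (X (i + 1)) = X (i + 2)) ∧
    ∀ u v : P, Q (u * v) = u ^ 2 * Q v + Q u * v ^ 2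

/-- `ψ` is the coproduct on the braid model `B`: the 𝔽₂-algebra map with
`ψ(g) = g ⊗ g` and `ψ(Qⁱg) = g^(2^i) ⊗ Qⁱg + Qⁱg ⊗ g^(2^i)` for `i ≥ 1`. -/
def IsPsiB (ψ : P →ₐ[F2] P ⊗[F2] P) : Prop :=
  ψ (X 0) = X 0 ⊗ₜ[F2] X 0 ∧
    ∀ i : ℕ, 1 ≤ i →
      ψ (X i) = ((X 0) ^ (2 ^ i)) ⊗ₜ[F2] (X i) + (X i) ⊗ₜ[F2] ((X 0) ^ (2 ^ i))

/-- `ψ` is the coproduct on the Rat model `R` (with Araki–Kudo operation `Q`):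
the 𝔽₂-algebra map with `ψ(g) = g ⊗ g`, `ψ(g⁻¹Qg) = g ⊗ g⁻¹Qg + g⁻¹Qg ⊗ g`, and
`ψ(Qⁱ(g⁻¹Qg)) = g^(2^i) ⊗ Qⁱ(g⁻¹Qg) + Qⁱg ⊗ (g⁻¹Qg)^(2^i) + (g⁻¹Qg)^(2^i) ⊗ Qⁱg
+ Qⁱ(g⁻¹Qg) ⊗ g^(2^i)` for `i ≥ 1`, where `Qⁱg = Qⁱ(X 0)`. -/
def IsPsiR (Q : P →ₗ[F2] P) (ψ : P →ₐ[F2] P ⊗[F2] P) : Prop :=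
  ψ (X 0) = X 0 ⊗ₜ[F2] X 0 ∧
  ψ (X 1) = X 0 ⊗ₜ[F2] X 1 + X 1 ⊗ₜ[F2] X 0 ∧
  ∀ i : ℕ, 1 ≤ i →
    ψ (X (i + 1)) =
      ((X 0) ^ (2 ^ i)) ⊗ₜ[F2] (X (i + 1))
      + ((⇑Q)^[i] (X 0)) ⊗ₜ[F2] ((X 1) ^ (2 ^ i))
      + ((X 1) ^ (2 ^ i)) ⊗ₜ[F2] ((⇑Q)^[i] (X 0))
      + (X (i + 1)) ⊗ₜ[F2] ((X 0) ^ (2 ^ i))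

/-- `π` is the family of projections: `π s` is the 𝔽₂-linear endomorphism fixing
every monomial of dimension `s` (with respect to the variable-dimension function
`dimv`) and annihilating every monomial of other dimensions. -/
def IsPi (dimv : ℕ → ℕ) (π : ℕ → P →ₗ[F2] P) : Prop :=
  ∀ (s : ℕ) (m : ℕ →₀ ℕ) (c : F2),
    π s (monomial m c) = if mwt dimv m = s then monomial m c else 0

/-! Since `ψ` is multiplicative, `ψ (∏ j ∈ J, X (j + 1))` expands over the subsets `T ⊆ J` into
tensors of monomials whose left factor is `X 0 ^ n * ∏ j ∈ T, X (j + 1)`, of dimension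
`∑ j ∈ T, (2 ^ (j + 1) - 1)` because `X 0` has dimension `0`. Distinct `T` give distinct left
factors, so these tensors are distinct vectors of the monomial basis of `B ⊗ B`; `π s ⊗ id` keeps
those of the right dimension, and a sum of distinct basis vectors vanishes only when it is empty. -/

theorem Module.Basis.sum_comp_ne_zero_iff {ι κ R M : Type*} [Semiring R] [Nontrivial R]
    [AddCommMonoid M] [Module R M] (b : Module.Basis ι R M) {s : Finset κ} {f : κ → ι}
    (hf : Set.InjOn f s) : ∑ k ∈ s, b (f k) ≠ 0 ↔ s.Nonempty := by
  classical
  refine ⟨fun h => Finset.nonempty_iff_ne_empty.2 fun hs => h (by simp [hs]), ?_⟩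
  rintro ⟨k, hk⟩ h
  rw [← Finset.sum_image hf] at h
  have := congrArg (fun x => b.repr x (f k)) h
  simp [Finsupp.single_apply, Finset.mem_image_of_mem f hk] at this

theorem Algebra.TensorProduct.prod_tmul_prod {R A B ι : Type*} [CommSemiring R]
    [CommSemiring A] [Algebra R A] [CommSemiring B] [Algebra R B]
    (s : Finset ι) (f : ι → A) (g : ι → B) :
    ∏ i ∈ s, f i ⊗ₜ[R] g i = (∏ i ∈ s, f i) ⊗ₜ[R] ∏ i ∈ s, g i := by
  classical
  induction s using Finset.induction_on with
  | empty => simp [Algebra.TensorProduct.one_def]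
  | insert a s ha ih => simp [Finset.prod_insert ha, ih, Algebra.TensorProduct.tmul_mul_tmul]

theorem mwt_eq_weight (w : ℕ → ℕ) : mwt w = Finsupp.weight w := by
  ext m
  simp [mwt, Finsupp.weight_apply]

noncomputable def expVec (T : Finset ℕ) (n : ℕ) : ℕ →₀ ℕ :=
  Finsupp.single 0 n + ∑ j ∈ T, Finsupp.single (j + 1) 1

theorem monomial_expVec {R : Type*} [CommSemiring R] (T : Finset ℕ) (n : ℕ) :
    (monomial (expVec T n) 1 : MvPolynomial ℕ R) = X 0 ^ n * ∏ j ∈ T, X (j + 1) := by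
  rw [expVec, ← one_mul (1 : R), ← monomial_mul, monomial_sum_one, X_pow_eq_monomial]
  simp [X]

theorem mwt_expVec (w : ℕ → ℕ) (T : Finset ℕ) (n : ℕ) :
    mwt w (expVec T n) = n * w 0 + ∑ j ∈ T, w (j + 1) := by
  simp [mwt_eq_weight, expVec, map_sum, Finsupp.weight_single]

theorem expVec_apply_succ (T : Finset ℕ) (n j : ℕ) :
    expVec T n (j + 1) = if j ∈ T then 1 else 0 := by
  simp [expVec, Finsupp.single_apply]

theorem eq_of_expVec_eq {T T' : Finset ℕ} {n n' : ℕ} (h : expVec T n = expVec T' n') :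
    T = T' := by
  ext j
  have := congrArg (· (j + 1)) h
  simp only [expVec_apply_succ] at this
  split_ifs at this <;> simp_all

theorem IsPsiB.map_prod_X_succ {ψ : P →ₐ[F2] P ⊗[F2] P} (hψ : IsPsiB ψ) (S : Finset ℕ) :
    ψ (∏ j ∈ S, X (j + 1)) = ∑ T ∈ S.powerset,
      monomial (expVec T (∑ j ∈ S \ T, 2 ^ (j + 1))) 1 ⊗ₜ[F2]
        monomial (expVec (S \ T) (∑ j ∈ T, 2 ^ (j + 1))) 1 := by
  have hX : ∀ j ∈ S, ψ (X (j + 1)) =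
      X (j + 1) ⊗ₜ[F2] (X 0 ^ 2 ^ (j + 1)) + (X 0 ^ 2 ^ (j + 1)) ⊗ₜ[F2] X (j + 1) := fun j _ => by
    rw [hψ.2 (j + 1) (Nat.succ_pos j), add_comm]
  rw [map_prod, Finset.prod_congr rfl hX, Finset.prod_add]
  refine Finset.sum_congr rfl fun T _ => ?_
  simp only [Algebra.TensorProduct.prod_tmul_prod, Algebra.TensorProduct.tmul_mul_tmul,
    monomial_expVec, Finset.prod_pow_eq_pow_sum]
  ring_nf

theorem psiB_top_class_components_general (J : Finset ℕ)
    (ψ : P →ₐ[F2] P ⊗[F2] P) (hψ : IsPsiB ψ)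
    (π : ℕ → P →ₗ[F2] P) (hπ : IsPi dB π)
    (y : P) (hy : y = ∏ j ∈ J, X (j + 1)) (s : ℕ) :
    TensorProduct.map (π s) (LinearMap.id : P →ₗ[F2] P) (ψ y) ≠ 0 ↔
      ∃ J' ⊆ J, s = ∑ j ∈ J', (2 ^ (j + 1) - 1) := by
  classical
  let b := (basisMonomials ℕ F2).tensorProduct (basisMonomials ℕ F2)
  let e : Finset ℕ → (ℕ →₀ ℕ) × (ℕ →₀ ℕ) := fun T =>
    (expVec T (∑ j ∈ J \ T, 2 ^ (j + 1)), expVec (J \ T) (∑ j ∈ T, 2 ^ (j + 1)))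
  have hcomponent : TensorProduct.map (π s) LinearMap.id (ψ y) =
      ∑ T ∈ J.powerset with ∑ j ∈ T, (2 ^ (j + 1) - 1) = s, b (e T) := by
    rw [hy, hψ.map_prod_X_succ, map_sum, Finset.sum_filter]
    refine Finset.sum_congr rfl fun T _ => ?_
    rw [map_tmul, hπ, mwt_expVec]
    simp only [dB, pow_zero, Nat.sub_self, mul_zero, zero_add]
    split_ifs <;> simp [b, e]
  have he : Set.InjOn e (J.powerset.filter fun T => ∑ j ∈ T, (2 ^ (j + 1) - 1) = s) :=
    fun _ _ _ _ h => eq_of_expVec_eq (congrArg Prod.fst h)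
  rw [hcomponent, b.sum_comp_ne_zero_iff he, Finset.filter_nonempty_iff]
  simp [eq_comm]

/-- Let `J ⊆ ℕ` be finite nonempty and `y = ∏_{j∈J} X (j+1) ∈ B`.
For `s ∈ ℕ`, `(π_s ⊗ id)(ψ_B(y)) ≠ 0` iff `s = Σ_{j∈J′} (2^(j+1) − 1)` for some
`J′ ⊆ J` (this computes the set `S(y)` for the top class of `Bβ_{2k}`). -/
theorem psiB_top_class_components (J : Finset ℕ) (hJ : J.Nonempty)
    (ψ : P →ₐ[F2] P ⊗[F2] P) (hψ : IsPsiB ψ)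
    (π : ℕ → P →ₗ[F2] P) (hπ : IsPi dB π)
    (y : P) (hy : y = ∏ j ∈ J, X (j + 1)) (s : ℕ) :
    TensorProduct.map (π s) (LinearMap.id : P →ₗ[F2] P) (ψ y) ≠ 0 ↔
      ∃ J' ⊆ J, s = ∑ j ∈ J', (2 ^ (j + 1) - 1) :=
  psiB_top_class_components_general J ψ hψ π hπ y hy s
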